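/- Let (Σ_C,P_C) be a Kelvin–Planck conjunction of the Kelvin–Planck theories (Σ_Θ,P_Θ) and (Σ,P), where Σ and Σ_Θ are disjoint. Suppose: (i) Σ_Θ is connected; (ii) any two states, one in Σ and the other in Σ_Θ, that are not of the same hotness in (Σ_C,P_C) are comparable under the weakly-hotter-than relation of (Σ_C,P_C); (iii) for each σ ∈ Σ there is a state σ_θ ∈ Σ_Θ that is weakly hotter than σ in (Σ_C,P_C) and also a state σ'_θ ∈ Σ_Θ such that σ is weakly hotter than σ'_θ in (Σ_C,P_C). Then (Σ_Θ,P_Θ) is a thermometer for (Σ,P): for each σ ∈ Σ there is σ_θ ∈ Σ_Θ such that both (0, δ_σ − δ_{σ_θ}) and its negative are members of \hat{P_C}. -/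

import Mathlib

open Set

noncomputable section

/-- Signed regular Borel measures on `X`, modeled via the Riesz representation
theorem as the weak-star dual of `C(X, ℝ)`. -/
abbrev Meas (X : Type*) [TopologicalSpace X] := WeakDual ℝ C(X, ℝ)

/-- The ambient space containing `V(X) = M°(X) ⊕ M(X)`; membership in the
subspace `M°(X)` of the first component is expressed by `p.1 1 = 0`. -/
abbrev VSp (X : Type*) [TopologicalSpace X] := Meas X × Meas X

/-- The cone of nonnegative measures. -/
def PosMeas (X : Type*) [TopologicalSpace X] : Set (Meas X) :=
  {μ | ∀ f : C(X, ℝ), (∀ x, 0 ≤ f x) → 0 ≤ μ f}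

variable {X : Type*} [TopologicalSpace X]

/-- The Dirac measure at a point, i.e. the evaluation functional. -/
def dirac (x : X) : Meas X :=
  (⟨⟨⟨fun f => f x, fun _ _ => rfl⟩, fun _ _ => rfl⟩,
    continuous_eval_const x⟩ : C(X, ℝ) →L[ℝ] ℝ)

/-- The set of nonnegative multiples of members of `P`. -/
def coneOf (P : Set (VSp X)) : Set (VSp X) :=
  {x | ∃ c : ℝ, 0 ≤ c ∧ ∃ p ∈ P, x = c • p}

/-- `\hat P`, the weak-star closure of the cone generated by `P`. -/
def hatP (P : Set (VSp X)) : Set (VSp X) :=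
  closure (coneOf P)

/-- A thermodynamical theory: processes have change of condition with total mass
zero (i.e. `P ⊆ V(X)`), and `\hat P` is convex. -/
def IsThermoTheory (P : Set (VSp X)) : Prop :=
  (∀ p ∈ P, p.1 (1 : C(X, ℝ)) = 0) ∧ Convex ℝ (hatP P)

/-- A Kelvin–Planck theory: a thermodynamical theory with
`\hat P ∩ ({0} × M₊(X)) = {(0,0)}`. -/
def IsKelvinPlanck (P : Set (VSp X)) : Prop :=
  IsThermoTheory P ∧ hatP P ∩ (({0} : Set (Meas X)) ×ˢ PosMeas X) = {(0, 0)}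

/-- A Clausius–Duhem pair `(η, T)` for the theory `P`: `η` and `T` are continuous,
`T` is strictly positive, and for every continuous `β` equal pointwise to `1/T`
(such a `β` exists, and is unique, by positivity of `T`), the Clausius–Duhem
inequality `∫ η d(Δm) ≥ ∫ (1/T) dq` holds for every process in `P`. -/
def IsCDPair (P : Set (VSp X)) (η T : C(X, ℝ)) : Prop :=
  (∀ x, 0 < T x) ∧
    ∀ β : C(X, ℝ), (∀ x, β x = (T x)⁻¹) → ∀ p ∈ P, p.2 β ≤ p.1 η

/-- A Clausius–Duhem temperature scale. -/
def IsCDTemp (P : Set (VSp X)) (T : C(X, ℝ)) : Prop :=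
  ∃ η : C(X, ℝ), IsCDPair P η T

/-- Two states are of the same hotness: both `(0, δ_a − δ_b)` and `(0, δ_b − δ_a)`
belong to `\hat P`. -/
def SameHotness (P : Set (VSp X)) (a b : X) : Prop :=
  ((0 : Meas X), dirac a - dirac b) ∈ hatP P ∧
    ((0 : Meas X), dirac b - dirac a) ∈ hatP P

/-- The hotness level of a state. -/
def hotnessLevel (P : Set (VSp X)) (a : X) : Set X :=
  {b | SameHotness P a b}

/-- A subset of the state space that is a hotness level. -/
def IsHotnessLevel (P : Set (VSp X)) (h : Set X) : Prop :=
  ∃ a : X, h = hotnessLevel P a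

/-- The (signed) measure `μ` is supported in the set `A`: `μ` annihilates every
continuous function vanishing on `A`. -/
def SuppIn (μ : Meas X) (A : Set X) : Prop :=
  ∀ f : C(X, ℝ), (∀ x ∈ A, f x = 0) → μ f = 0

/-- `\hat Q` contains a passive heat transfer from hotness level `h` to `h'`:
an element `(0, μ − μ')` of `\hat Q` with `μ, μ'` nonnegative, `supp μ ⊆ h`,
`supp μ' ⊆ h'` and `μ(h) = μ'(h') > 0` (the common value being the total mass). -/
def IsPassiveHT (Q : Set (VSp X)) (h h' : Set X) : Prop :=
  ∃ μ μ' : Meas X, μ ∈ PosMeas X ∧ μ' ∈ PosMeas X ∧ SuppIn μ h ∧ SuppIn μ' h' ∧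
    μ (1 : C(X, ℝ)) = μ' (1 : C(X, ℝ)) ∧ 0 < μ (1 : C(X, ℝ)) ∧
    ((0 : Meas X), μ - μ') ∈ hatP Q

/-- Hotness level `h'` is hotter than `h`: the levels are distinct and every
thermodynamical theory whose closed process cone contains `P` together with a
passive heat transfer from `h` to `h'` fails to be a Kelvin–Planck theory. -/
def Hotter (P : Set (VSp X)) (h' h : Set X) : Prop :=
  h' ≠ h ∧ ∀ Pd : Set (VSp X), IsThermoTheory Pd → P ⊆ hatP Pd →
    IsPassiveHT Pd h h' → ¬ IsKelvinPlanck Pd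

/-- State `a` is hotter than state `b`. -/
def HotterState (P : Set (VSp X)) (a b : X) : Prop :=
  Hotter P (hotnessLevel P a) (hotnessLevel P b)

/-- A Carnot element of the theory `P` operating between hotness levels `h'` and
`h`: a reversible cyclic element `(0, μ' − μ)` with `μ', μ` nonzero nonnegative
measures supported in `h'`, `h` respectively. -/
def IsCarnotBetween (P : Set (VSp X)) (h' h : Set X) (p : VSp X) : Prop :=
  p ∈ hatP P ∧ -p ∈ hatP P ∧
    ∃ μ' μ : Meas X, μ' ∈ PosMeas X ∧ μ ∈ PosMeas X ∧ μ' ≠ 0 ∧ μ ≠ 0 ∧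
      SuppIn μ' h' ∧ SuppIn μ h ∧ p = ((0 : Meas X), μ' - μ)

end

noncomputable section

/-- The inclusion of the left summand as a continuous map. -/
def inlCM (X Y : Type*) [TopologicalSpace X] [TopologicalSpace Y] : C(X, X ⊕ Y) :=
  ⟨Sum.inl, continuous_inl⟩

/-- The inclusion of the right summand as a continuous map. -/
def inrCM (X Y : Type*) [TopologicalSpace X] [TopologicalSpace Y] : C(Y, X ⊕ Y) :=
  ⟨Sum.inr, continuous_inr⟩

/-- The continuous indicator function of the left summand of a disjoint union. -/
def charL (X Y : Type*) [TopologicalSpace X] [TopologicalSpace Y] : C(X ⊕ Y, ℝ) :=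
  ⟨Sum.elim (fun _ => (1 : ℝ)) (fun _ => (0 : ℝ)), by continuity⟩

/-- The continuous indicator function of the right summand of a disjoint union. -/
def charR (X Y : Type*) [TopologicalSpace X] [TopologicalSpace Y] : C(X ⊕ Y, ℝ) :=
  ⟨Sum.elim (fun _ => (0 : ℝ)) (fun _ => (1 : ℝ)), by continuity⟩

/-- `P` is essentially contained in `Q` along the embedding `ι`: every process of
`P`, extended by zero outside the range of `ι` (i.e. pushed forward along `ι`),
belongs to `Q`. -/
def EssCont {Z W : Type*} [TopologicalSpace Z] [TopologicalSpace W]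
    (ι : C(Z, W)) (P : Set (VSp Z)) (Q : Set (VSp W)) : Prop :=
  ∀ p ∈ P, ∃ q ∈ Q, ∀ f : C(W, ℝ),
    q.1 f = p.1 (f.comp ι) ∧ q.2 f = p.2 (f.comp ι)

/-- `P₃`, on the disjoint union `X ⊕ Y`, is a conjunction of the theories `P₁`
(on `X`) and `P₂` (on `Y`): it is a thermodynamical theory essentially containing
`P₁` and `P₂`, and every change of condition of `P₃` vanishes on each of `X`, `Y`. -/
def IsConjunction {X Y : Type*} [TopologicalSpace X] [TopologicalSpace Y]
    (P₁ : Set (VSp X)) (P₂ : Set (VSp Y)) (P₃ : Set (VSp (X ⊕ Y))) : Prop :=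
  IsThermoTheory P₃ ∧
    EssCont (inlCM X Y) P₁ P₃ ∧ EssCont (inrCM X Y) P₂ P₃ ∧
    ∀ p ∈ P₃, p.1 (charL X Y) = 0 ∧ p.1 (charR X Y) = 0

/-- State `a` is weakly hotter than state `b` in the theory `P`. -/
def WHotterState {X : Type*} [TopologicalSpace X] (P : Set (VSp X)) (a b : X) : Prop :=
  ¬ SameHotness P a b ∧
    ∃ ν ∈ PosMeas X, ((0 : Meas X), dirac a - dirac b + ν) ∈ hatP P

/-- The hotness levels of the theory `P` are totally ordered by the
hotter-than relation. -/
def TotallyOrderedHotness {X : Type*} [TopologicalSpace X] (P : Set (VSp X)) : Prop :=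
  ∀ a b : X, SameHotness P a b ∨ HotterState P a b ∨ HotterState P b a

/-- `PC`, on `Θ ⊕ X`, is a thermometric conjunction of the thermometer theory `PΘ`
(on `Θ`) and the theory `P` (on `X`): a Kelvin–Planck conjunction in which every
state of `X` is of the same hotness as some state of `Θ`. -/
def IsThermometricConjunction {Θ X : Type*} [TopologicalSpace Θ] [TopologicalSpace X]
    (PΘ : Set (VSp Θ)) (P : Set (VSp X)) (PC : Set (VSp (Θ ⊕ X))) : Prop :=
  IsKelvinPlanck PC ∧ IsConjunction PΘ P PC ∧
    ∀ σ : X, ∃ θ : Θ, SameHotness PC (Sum.inr σ) (Sum.inl θ)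

end

/-! Every continuous linear functional `L` that is nonpositive on the closed process cone
`\hat P_C` and nonnegative on `{0} × M₊` defines an abstract inverse temperature
`x ↦ L (0, δ_x)`, monotone along the weakly-hotter-than relation. Since `\hat P_C` meets
`{0} × M₊` only in `0`, Hahn–Banach separation from the compact base `{0} × {μ ≥ 0, μ(1) = 1}`
makes these functionals rich enough that two states with the same inverse temperature for every
such `L` are of the same hotness. For fixed `σ`, the states of `Σ_Θ` at most and at least as cold
as `σ` form two closed sets, nonempty by (iii) and covering `Σ_Θ` by (ii); connectedness of
`Σ_Θ` forces a common point. -/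

instance WeakDual.instLocallyConvexSpace {E : Type*} [NormedAddCommGroup E] [NormedSpace ℝ E] :
    LocallyConvexSpace ℝ (WeakDual ℝ E) :=
  WeakBilin.locallyConvexSpace

section ConeDuality

variable {E : Type*} [AddCommGroup E] [Module ℝ E] [TopologicalSpace E]

def dualWedge (K B : Set E) : Set (E →L[ℝ] ℝ) :=
  {L | (∀ p ∈ K, L p ≤ 0) ∧ ∀ b ∈ B, 0 ≤ L b}

theorem map_nonpos_of_forall_map_lt {K : Set E} (hK : ∀ c : ℝ, 0 ≤ c → ∀ p ∈ K, c • p ∈ K)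
    {L : E →L[ℝ] ℝ} {u : ℝ} (hL : ∀ p ∈ K, L p < u) {p : E} (hp : p ∈ K) : L p ≤ 0 := by
  by_contra! hpos
  have hu : 0 < u := by simpa using hL _ (hK 0 le_rfl p hp)
  have := hL _ (hK (u / L p) (div_nonneg hu.le hpos.le) p hp)
  rw [map_smul, smul_eq_mul, div_mul_cancel₀ _ hpos.ne'] at this
  exact lt_irrefl u this

variable [IsTopologicalAddGroup E] [ContinuousSMul ℝ E] [LocallyConvexSpace ℝ E] {K B : Set E}

theorem exists_nonpos_of_pos_on_compact (hKs : ∀ c : ℝ, 0 ≤ c → ∀ p ∈ K, c • p ∈ K)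
    (hK0 : (0 : E) ∈ K) (hKc : IsClosed K) (hKv : Convex ℝ K) (hBc : IsCompact B)
    (hBv : Convex ℝ B) (hBK : Disjoint B K) :
    ∃ L : E →L[ℝ] ℝ, ∃ m > 0, (∀ p ∈ K, L p ≤ 0) ∧ ∀ b ∈ B, m ≤ L b := by
  obtain ⟨f, u, v, hfB, huv, hfK⟩ := geometric_hahn_banach_compact_closed hBv hBc hKv hKc hBK
  have hv : v < 0 := by simpa using hfK 0 hK0
  refine ⟨-f, -u, by linarith, fun p hp => ?_, fun b hb => by simpa using (hfB b hb).le⟩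
  exact map_nonpos_of_forall_map_lt hKs (u := -v) (fun q hq => by simpa using hfK q hq) hp

theorem mem_of_forall_dualWedge_eq_zero (hKs : ∀ c : ℝ, 0 ≤ c → ∀ p ∈ K, c • p ∈ K)
    (hK0 : (0 : E) ∈ K) (hKc : IsClosed K) (hKv : Convex ℝ K) (hBc : IsCompact B)
    (hBv : Convex ℝ B) (hBK : Disjoint B K) {x : E} (hx : ∀ L ∈ dualWedge K B, L x = 0) : x ∈ K := by
  by_contra hxK
  obtain ⟨L₀, u₀, hL₀K, hu₀⟩ := geometric_hahn_banach_closed_point hKv hKc hxK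
  have hL₀x : 0 < L₀ x := (by simpa using hL₀K 0 hK0 : 0 < u₀).trans hu₀
  obtain ⟨L₁, m, hm, hL₁K, hL₁B⟩ := exists_nonpos_of_pos_on_compact hKs hK0 hKc hKv hBc hBv hBK
  obtain ⟨M, hM⟩ := hBc.bddBelow_image L₀.continuous.continuousOn
  -- `L₁` is bounded away from zero on the compact `B`, so adding a small multiple of `L₀`
  -- keeps it in the wedge; two members of the wedge then pin down `L₀ x`.
  set ε := m / (|M| + 1)
  have hε : 0 < ε := by positivity
  have hL₂ : L₁ + ε • L₀ ∈ dualWedge K B := by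
    refine ⟨fun p hp => ?_, fun b hb => ?_⟩
    · have := map_nonpos_of_forall_map_lt hKs hL₀K hp
      have := hL₁K p hp
      simp only [add_apply, smul_apply, smul_eq_mul]
      nlinarith
    · have hMb : M ≤ L₀ b := hM ⟨b, hb, rfl⟩
      have hεM : ε * (|M| + 1) = m := div_mul_cancel₀ _ (by positivity)
      simp only [add_apply, smul_apply, smul_eq_mul]
      nlinarith [hL₁B b hb, neg_abs_le M]
  have h₁ := hx L₁ ⟨hL₁K, fun b hb => hm.le.trans (hL₁B b hb)⟩
  have h₂ := hx _ hL₂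
  simp only [add_apply, smul_apply, smul_eq_mul, h₁, zero_add, mul_eq_zero] at h₂
  exact h₂.elim hε.ne' hL₀x.ne'

end ConeDuality

section PositiveMeasures

variable {W : Type*} [TopologicalSpace W] {μ : Meas W}

theorem apply_mono_of_mem_posMeas (hμ : μ ∈ PosMeas W) {f g : C(W, ℝ)} (hfg : f ≤ g) :
    μ f ≤ μ g := by
  have := hμ (g - f) fun x => sub_nonneg.2 (hfg x)
  rwa [map_sub, sub_nonneg] at this

theorem isClosed_posMeas : IsClosed (PosMeas W) := by
  simp only [PosMeas, ofPred_forall]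
  exact isClosed_iInter fun f => isClosed_iInter fun _ =>
    isClosed_le continuous_const (WeakDual.eval_continuous f)

variable (W) in
def posProb : Set (Meas W) :=
  {μ | μ ∈ PosMeas W ∧ μ 1 = 1}

theorem convex_posProb : Convex ℝ (posProb W) := by
  rintro μ ⟨hμ, hμ1⟩ ν ⟨hν, hν1⟩ a b ha hb hab
  refine ⟨fun f hf => ?_, ?_⟩
  · show 0 ≤ a * μ f + b * ν f
    exact add_nonneg (mul_nonneg ha (hμ f hf)) (mul_nonneg hb (hν f hf))
  · show a * μ 1 + b * ν 1 = 1
    simpa [hμ1, hν1] using hab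

variable [CompactSpace W]

theorem abs_apply_le_of_mem_posMeas (hμ : μ ∈ PosMeas W) (f : C(W, ℝ)) :
    |μ f| ≤ ‖f‖ * μ 1 := by
  have hf : ∀ x, |f x| ≤ ‖f‖ := fun x => (Real.norm_eq_abs _).symm.trans_le (f.norm_coe_le_norm x)
  have hle := apply_mono_of_mem_posMeas hμ (f := f) (g := ‖f‖ • 1)
    fun x => by simpa using (abs_le.1 (hf x)).2
  have hge := apply_mono_of_mem_posMeas hμ (f := -(‖f‖ • 1)) (g := f)
    fun x => by simpa using (abs_le.1 (hf x)).1
  simp only [map_neg, map_smul, smul_eq_mul] at hle hge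
  exact abs_le.2 ⟨by linarith, hle⟩

theorem eq_zero_of_mem_posMeas_of_apply_one (hμ : μ ∈ PosMeas W) (h : μ 1 = 0) : μ = 0 :=
  ContinuousLinearMap.ext fun f =>
    (abs_nonpos_iff.1 (by simpa [h] using abs_apply_le_of_mem_posMeas hμ f) : μ f = 0)

theorem isCompact_posProb : IsCompact (posProb W) := by
  refine WeakDual.isCompact_of_bounded_of_closed ?_
    (isClosed_posMeas.inter (isClosed_eq (WeakDual.eval_continuous 1) continuous_const))
  refine (Metric.isBounded_closedBall (x := (0 : StrongDual ℝ C(W, ℝ))) (r := 1)).subset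
    fun μ hμ => ?_
  refine (dist_zero_right μ).le.trans
    (ContinuousLinearMap.opNorm_le_bound _ zero_le_one fun f => ?_)
  have h := abs_apply_le_of_mem_posMeas hμ.1 f
  rw [hμ.2, mul_one] at h
  rw [Real.norm_eq_abs, one_mul]
  exact h

theorem eq_zero_or_eq_smul_of_mem_posMeas (hμ : μ ∈ PosMeas W) :
    μ = 0 ∨ ∃ t : ℝ, 0 < t ∧ ∃ ν ∈ posProb W, μ = t • ν := by
  rcases (hμ 1 fun _ => zero_le_one).eq_or_lt with h | h
  · exact Or.inl (eq_zero_of_mem_posMeas_of_apply_one hμ h.symm)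
  refine Or.inr ⟨μ 1, h, (μ 1)⁻¹ • μ, ⟨fun f hf => ?_, ?_⟩, ?_⟩
  · exact mul_nonneg (inv_nonneg.2 h.le) (hμ f hf)
  · exact inv_mul_cancel₀ h.ne'
  · rw [smul_smul, mul_inv_cancel₀ h.ne', one_smul]

end PositiveMeasures

theorem continuous_dirac {W : Type*} [TopologicalSpace W] : Continuous (dirac : W → Meas W) :=
  WeakDual.continuous_of_continuous_eval fun f => f.continuous

section Coldness

variable {W : Type*} [TopologicalSpace W] {Q : Set (VSp W)}

theorem smul_mem_hatP {c : ℝ} (hc : 0 ≤ c) {x : VSp W} (hx : x ∈ hatP Q) : c • x ∈ hatP Q := by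
  refine map_mem_closure (continuous_const_smul c) hx ?_
  rintro y ⟨c', hc', p, hp, rfl⟩
  exact ⟨c * c', mul_nonneg hc hc', p, hp, smul_smul c c' p⟩

theorem zero_mem_hatP (hQ : IsKelvinPlanck Q) : (0 : VSp W) ∈ hatP Q := by
  have : ((0 : Meas W), (0 : Meas W)) ∈ hatP Q ∩ ({0} ×ˢ PosMeas W) := hQ.2 ▸ rfl
  exact this.1

theorem disjoint_posProb_hatP (hQ : IsKelvinPlanck Q) :
    Disjoint ({(0 : Meas W)} ×ˢ posProb W) (hatP Q) := by
  rw [disjoint_left]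
  rintro ⟨m, μ⟩ ⟨hm, hμ, hμ1⟩ hK
  have : (m, μ) ∈ ({(0, 0)} : Set (VSp W)) := hQ.2 ▸ ⟨hK, hm, hμ⟩
  simp only [mem_singleton_iff, Prod.mk.injEq] at this
  rw [this.2] at hμ1
  exact zero_ne_one hμ1

/-- Each `L` in the wedge gives an abstract inverse temperature `x ↦ L (0, δ_x)`. -/
def ColdnessLE (Q : Set (VSp W)) (a b : W) : Prop :=
  ∀ L ∈ dualWedge (hatP Q) ({(0 : Meas W)} ×ˢ posProb W), L (0, dirac a) ≤ L (0, dirac b)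

theorem isClosed_setOf_coldnessLE : IsClosed {p : W × W | ColdnessLE Q p.1 p.2} := by
  simp only [ColdnessLE, ofPred_forall]
  refine isClosed_iInter fun L => isClosed_iInter fun _ => isClosed_le ?_ ?_ <;>
    exact L.continuous.comp (continuous_const.prodMk (continuous_dirac.comp (by fun_prop)))

variable [CompactSpace W]

theorem nonneg_of_mem_dualWedge {L : VSp W →L[ℝ] ℝ}
    (hL : L ∈ dualWedge (hatP Q) ({(0 : Meas W)} ×ˢ posProb W)) {ν : Meas W}
    (hν : ν ∈ PosMeas W) : 0 ≤ L (0, ν) := by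
  obtain rfl | ⟨t, ht, μ, hμ, rfl⟩ := eq_zero_or_eq_smul_of_mem_posMeas hν
  · exact (map_zero L).ge
  · have : ((0 : Meas W), t • μ) = t • ((0 : Meas W), μ) := by rw [Prod.smul_mk, smul_zero]
    rw [this, map_smul, smul_eq_mul]
    exact mul_nonneg ht.le (hL.2 _ ⟨rfl, hμ⟩)

theorem coldnessLE_of_wHotterState {a b : W} (h : WHotterState Q a b) : ColdnessLE Q a b := by
  obtain ⟨-, ν, hν, hmem⟩ := h
  intro L hL
  have hsplit : ((0 : Meas W), dirac a - dirac b + ν)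
      = ((0 : Meas W), dirac a) - (0, dirac b) + (0, ν) := by simp
  have := hL.1 _ hmem
  rw [hsplit, map_add, map_sub] at this
  linarith [nonneg_of_mem_dualWedge hL hν]

theorem sameHotness_of_coldnessLE (hQ : IsKelvinPlanck Q) {a b : W} (hab : ColdnessLE Q a b)
    (hba : ColdnessLE Q b a) : SameHotness Q a b := by
  have hmem : ∀ c d : W, ColdnessLE Q c d → ColdnessLE Q d c →
      ((0 : Meas W), dirac c - dirac d) ∈ hatP Q := fun c d hcd hdc =>
    mem_of_forall_dualWedge_eq_zero (fun t ht _ => smul_mem_hatP ht) (zero_mem_hatP hQ)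
      isClosed_closure hQ.1.2 (isCompact_singleton.prod isCompact_posProb)
      ((convex_singleton _).prod convex_posProb) (disjoint_posProb_hatP hQ) fun L hL => by
        rw [← sub_zero (0 : Meas W), ← Prod.mk_sub_mk, map_sub,
          le_antisymm (hcd L hL) (hdc L hL), sub_self]
  exact ⟨hmem a b hab hba, hmem b a hba hab⟩

theorem exists_sameHotness_of_continuous {Y : Type*} [TopologicalSpace Y] [PreconnectedSpace Y]
    (hQ : IsKelvinPlanck Q) {f : Y → W} (hf : Continuous f) (σ : W)
    (hcomp : ∀ y, ¬ SameHotness Q σ (f y) → WHotterState Q σ (f y) ∨ WHotterState Q (f y) σ)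
    (hhot : ∃ y, WHotterState Q (f y) σ) (hcold : ∃ y, WHotterState Q σ (f y)) :
    ∃ y, SameHotness Q σ (f y) := by
  by_contra! hno
  obtain ⟨yH, hH⟩ := hhot
  obtain ⟨yC, hC⟩ := hcold
  have hclosed := isClosed_setOf_coldnessLE (Q := Q)
  obtain ⟨y, -, hyσ, hσy⟩ := isPreconnected_closed_iff.1 isPreconnected_univ
    {y | ColdnessLE Q (f y) σ} {y | ColdnessLE Q σ (f y)}
    (hclosed.preimage (hf.prodMk continuous_const)) (hclosed.preimage (continuous_const.prodMk hf))
    (fun y _ => (hcomp y (hno y)).symm.imp coldnessLE_of_wHotterState coldnessLE_of_wHotterState)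
    ⟨yH, trivial, coldnessLE_of_wHotterState hH⟩ ⟨yC, trivial, coldnessLE_of_wHotterState hC⟩
  exact hno y (sameHotness_of_coldnessLE hQ hσy hyσ)

end Coldness

theorem thermometer_of_connected_and_comparable_general
    {Θ X : Type*} [TopologicalSpace Θ] [CompactSpace Θ]
    [TopologicalSpace X] [CompactSpace X]
    (PC : Set (VSp (Θ ⊕ X))) (hPC : IsKelvinPlanck PC)
    (hconn : ConnectedSpace Θ)
    (hcomp : ∀ (σ : X) (θ : Θ), ¬ SameHotness PC (Sum.inr σ) (Sum.inl θ) →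
      WHotterState PC (Sum.inr σ) (Sum.inl θ) ∨
        WHotterState PC (Sum.inl θ) (Sum.inr σ))
    (hbound : ∀ σ : X,
      (∃ θ : Θ, WHotterState PC (Sum.inl θ) (Sum.inr σ)) ∧
      (∃ θ' : Θ, WHotterState PC (Sum.inr σ) (Sum.inl θ'))) :
    ∀ σ : X, ∃ θ : Θ, SameHotness PC (Sum.inr σ) (Sum.inl θ) := by
  have := hconn
  exact fun σ => exists_sameHotness_of_continuous hPC continuous_inl (Sum.inr σ) (hcomp σ)
    (hbound σ).1 (hbound σ).2

/-- **Proposition.** Let `(XC, PC)` (with `XC = Θ ⊕ X`) be a Kelvin–Planck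
conjunction of the Kelvin–Planck theories `(Θ, PΘ)` and `(X, P)`.  If (i) `Θ` is
connected, (ii) any two states, one in `X` and the other in `Θ`, not of the same
hotness in the conjunction are comparable under the weakly-hotter-than relation of
the conjunction, and (iii) for each `σ ∈ X` there are states of `Θ` weakly hotter
than, and weakly colder than, `σ`, then `(Θ, PΘ)` is a thermometer for `(X, P)`:
every `σ ∈ X` is of the same hotness in the conjunction as some state of `Θ`. -/
theorem thermometer_of_connected_and_comparable
    {Θ X : Type*} [TopologicalSpace Θ] [CompactSpace Θ] [T2Space Θ]
    [TopologicalSpace X] [CompactSpace X] [T2Space X]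
    (PΘ : Set (VSp Θ)) (hPΘ : IsKelvinPlanck PΘ)
    (P : Set (VSp X)) (hP : IsKelvinPlanck P)
    (PC : Set (VSp (Θ ⊕ X))) (hPC : IsKelvinPlanck PC)
    (hconj : IsConjunction PΘ P PC)
    (hconn : ConnectedSpace Θ)
    (hcomp : ∀ (σ : X) (θ : Θ), ¬ SameHotness PC (Sum.inr σ) (Sum.inl θ) →
      WHotterState PC (Sum.inr σ) (Sum.inl θ) ∨
        WHotterState PC (Sum.inl θ) (Sum.inr σ))
    (hbound : ∀ σ : X,
      (∃ θ : Θ, WHotterState PC (Sum.inl θ) (Sum.inr σ)) ∧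
      (∃ θ' : Θ, WHotterState PC (Sum.inr σ) (Sum.inl θ'))) :
    ∀ σ : X, ∃ θ : Θ, SameHotness PC (Sum.inr σ) (Sum.inl θ) :=
  thermometer_of_connected_and_comparable_general PC hPC hconn hcomp hbound
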